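/- Define f₁: ℝ² → ℤ by f₁(x,y) = ⌊x + 2/5⌋ + ⌊x + 1/5⌋ + ⌊3x − y + 4/5⌋ − ⌊y⌋ − ⌊5x − 2y⌋. Then f₁(x,y) ≥ 0 for all (x,y) ∈ ℝ², and in fact f₁ only takes values in {0, 1, 2}. -/
import Mathlib


/-- `f₁(x,y) = ⌊x+2/5⌋ + ⌊x+1/5⌋ + ⌊3x−y+4/5⌋ − ⌊y⌋ − ⌊5x−2y⌋`. -/
noncomputable def f1 (x y : ℝ) : ℤ :=
  ⌊x + 2 / 5⌋ + ⌊x + 1 / 5⌋ + ⌊3 * x - y + 4 / 5⌋ - ⌊y⌋ - ⌊5 * x - 2 * y⌋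

/-- `f₁(x,y) ≥ 0` everywhere, and in fact `f₁` only takes the values `0`, `1`, `2`. -/
theorem stmt14 : ∀ x y : ℝ,
    0 ≤ f1 x y ∧ (f1 x y = 0 ∨ f1 x y = 1 ∨ f1 x y = 2) := by
  intro x y
  have h1l := Int.floor_le (x + 2 / 5)
  have h1u := Int.lt_floor_add_one (x + 2 / 5)
  have h2l := Int.floor_le (x + 1 / 5)
  have h2u := Int.lt_floor_add_one (x + 1 / 5)
  have h3l := Int.floor_le (3 * x - y + 4 / 5)
  have h3u := Int.lt_floor_add_one (3 * x - y + 4 / 5)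
  have h4l := Int.floor_le y
  have h4u := Int.lt_floor_add_one y
  have h5l := Int.floor_le (5 * x - 2 * y)
  have h5u := Int.lt_floor_add_one (5 * x - 2 * y)
  have h6l := Int.floor_le x
  have h6u := Int.lt_floor_add_one x
  set F1 := ⌊x + 2 / 5⌋ with hF1
  set F2 := ⌊x + 1 / 5⌋ with hF2
  set F3 := ⌊3 * x - y + 4 / 5⌋ with hF3
  set F4 := ⌊y⌋ with hF4
  set F5 := ⌊5 * x - 2 * y⌋ with hF5
  set F6 := ⌊x⌋ with hF6
  have hf : f1 x y = F1 + F2 + F3 - F4 - F5 := rfl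
  -- integer monotonicity facts
  have hm1 : F2 ≤ F1 := Int.floor_le_floor (by linarith)
  have hm1' : F1 ≤ F2 + 1 := by
    have h := Int.floor_le_floor (show x + 2 / 5 ≤ (x + 1 / 5) + 1 by linarith)
    rwa [Int.floor_add_one] at h
  have hm2 : F6 ≤ F2 := Int.floor_le_floor (by linarith)
  have hm2' : F2 ≤ F6 + 1 := by
    have h := Int.floor_le_floor (show x + 1 / 5 ≤ x + 1 by linarith)
    rwa [Int.floor_add_one] at h
  -- crude bounds on f1
  have hn1 : -1 ≤ f1 x y := by
    have hr : (-2 : ℝ) < ((F1 + F2 + F3 - F4 - F5 : ℤ) : ℝ) := by push_cast; linarith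
    have : (-2 : ℤ) < F1 + F2 + F3 - F4 - F5 := by exact_mod_cast hr
    omega
  have hn2 : f1 x y ≤ 3 := by
    have hr : ((F1 + F2 + F3 - F4 - F5 : ℤ) : ℝ) < 4 := by push_cast; linarith
    have : F1 + F2 + F3 - F4 - F5 < (4 : ℤ) := by exact_mod_cast hr
    omega
  -- rule out f1 = -1
  have hne1 : f1 x y ≠ -1 := by
    intro h
    rw [hf] at h
    have hr : (F1 : ℝ) + F2 + F3 - F4 - F5 = -1 := by exact_mod_cast h
    -- b := x + 1/5 - F2 > 2/5, a := x + 2/5 - F1 > 2/5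
    have c1 : (2 : ℝ) / 5 < x + 1 / 5 - F2 := by linarith
    have c2 : (2 : ℝ) / 5 < x + 2 / 5 - F1 := by linarith
    have hF12 : F1 = F2 := by
      rcases (by omega : F1 = F2 ∨ F1 = F2 + 1) with h' | h'
      · exact h'
      · exfalso
        have hc : (F1 : ℝ) = (F2 : ℝ) + 1 := by exact_mod_cast h'
        linarith
    have hF12r : (F1 : ℝ) = F2 := by exact_mod_cast hF12
    -- b > 3/5 from c < 1
    have c3 : (3 : ℝ) / 5 < x + 1 / 5 - F2 := by linarith
    have hF26 : F2 = F6 := by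
      rcases (by omega : F2 = F6 ∨ F2 = F6 + 1) with h' | h'
      · exact h'
      · exfalso
        have hc : (F2 : ℝ) = (F6 : ℝ) + 1 := by exact_mod_cast h'
        linarith
    have hF26r : (F2 : ℝ) = F6 := by exact_mod_cast hF26
    have hK : F5 - 5 * F6 + 2 * F4 = 2 := by
      have hKl : (1 : ℝ) < (F5 : ℝ) - 5 * F6 + 2 * F4 := by linarith
      have hKh : (F5 : ℝ) - 5 * F6 + 2 * F4 < 3 := by linarith
      have h1 : (1 : ℤ) < F5 - 5 * F6 + 2 * F4 := by exact_mod_cast (by push_cast; linarith : ((1:ℤ):ℝ) < ((F5 - 5 * F6 + 2 * F4 : ℤ) : ℝ))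
      have h2 : F5 - 5 * F6 + 2 * F4 < (3 : ℤ) := by exact_mod_cast (by push_cast; linarith : ((F5 - 5 * F6 + 2 * F4 : ℤ) : ℝ) < ((3:ℤ):ℝ))
      omega
    have hKr : (F5 : ℝ) - 5 * F6 + 2 * F4 = 2 := by exact_mod_cast hK
    linarith
  -- rule out f1 = 3
  have hne3 : f1 x y ≠ 3 := by
    intro h
    rw [hf] at h
    have hr : (F1 : ℝ) + F2 + F3 - F4 - F5 = 3 := by exact_mod_cast h
    -- a < 2/5, b < 2/5
    have c1 : x + 1 / 5 - (F2 : ℝ) < 2 / 5 := by linarith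
    have c2 : x + 2 / 5 - (F1 : ℝ) < 2 / 5 := by linarith
    have hF12 : F1 = F2 := by
      rcases (by omega : F1 = F2 ∨ F1 = F2 + 1) with h' | h'
      · exact h'
      · exfalso
        have hc : (F1 : ℝ) = (F2 : ℝ) + 1 := by exact_mod_cast h'
        linarith
    have hF12r : (F1 : ℝ) = F2 := by exact_mod_cast hF12
    -- b < 1/5 since a = b + 1/5 < 2/5
    have c3 : x + 1 / 5 - (F2 : ℝ) < 1 / 5 := by linarith
    have hF26 : F2 = F6 + 1 := by
      rcases (by omega : F2 = F6 ∨ F2 = F6 + 1) with h' | h'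
      · exfalso
        have hc : (F2 : ℝ) = (F6 : ℝ) := by exact_mod_cast h'
        linarith
      · exact h'
    have hF26r : (F2 : ℝ) = (F6 : ℝ) + 1 := by exact_mod_cast hF26
    -- b < 1/10 from c ≥ 0 and d, e < 1
    have c4 : x + 1 / 5 - (F2 : ℝ) < 1 / 10 := by linarith
    -- d > 2b + 4/5, e > 2b + 4/5 from c ≥ 0
    have hK : F5 - 5 * F6 + 2 * F4 = 2 := by
      have hKl : (1 : ℝ) < (F5 : ℝ) - 5 * F6 + 2 * F4 := by linarith
      have hKh : (F5 : ℝ) - 5 * F6 + 2 * F4 < 3 := by linarith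
      have h1 : (1 : ℤ) < F5 - 5 * F6 + 2 * F4 := by exact_mod_cast (by push_cast; linarith : ((1:ℤ):ℝ) < ((F5 - 5 * F6 + 2 * F4 : ℤ) : ℝ))
      have h2 : F5 - 5 * F6 + 2 * F4 < (3 : ℤ) := by exact_mod_cast (by push_cast; linarith : ((F5 - 5 * F6 + 2 * F4 : ℤ) : ℝ) < ((3:ℤ):ℝ))
      omega
    have hKr : (F5 : ℝ) - 5 * F6 + 2 * F4 = 2 := by exact_mod_cast hK
    linarith
  constructor
  · omega
  · omega
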